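/- Let F : ℝ^d → ℝ be twice differentiable with L₂-Lipschitz Hessian. Fix x, g ∈ ℝ^d, a symmetric matrix H ∈ ℝ^{d×d}, M ≥ 4L₂ and η ≥ 0. Define m_x(y) := F(x) + ⟨g, y − x⟩ + (1/2)⟨y − x, H(y − x)⟩ + (M/6)‖y − x‖³, and let y be a minimizer of m_x over the closed Euclidean ball of radius η centered at x. Then F(x) − F(y) ≥ (M/12)·‖y − x‖³ − (8/√M)·‖∇F(x) − g‖^{3/2} − (4η^{3/2}/√M)·‖∇²F(x) − H‖_op^{3/2}. -/

import Mathlib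

/-!
Along the segment from `x` to `y`, the Lipschitz bound on the Hessian gives the cubic Taylor
estimate `F y ≤ F x + ⟪∇F x, s⟫ + ½⟪∇²F x s, s⟫ + (L₂/6)‖s‖³` with `s = y - x`. Comparing the
model at its minimiser `y` with its value `F x` at the centre and replacing `∇F x`, `∇²F x` by
`g`, `H` costs `‖∇F x - g‖‖s‖ + ½‖∇²F x - H‖‖s‖²`. Young's inequality (exponents `3` and `3/2`)
absorbs each error term into `(M/48)‖s‖³` at the price of the `3/2`-powers in the statement,
using `‖s‖ ≤ η` for the Hessian term, and `M/6 - L₂/6 - 2·M/48 ≥ M/12` as `M ≥ 4L₂`.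
-/

open scoped RealInnerProductSpace
open Set

theorem taylor_two_le_of_hasDerivAt {φ ψ χ : ℝ → ℝ} {K : ℝ}
    (hφ : ∀ t, HasDerivAt φ (ψ t) t) (hψ : ∀ t, HasDerivAt ψ (χ t) t)
    (hχ : ∀ t ∈ Ico (0 : ℝ) 1, χ t ≤ χ 0 + K * t) :
    φ 1 ≤ φ 0 + ψ 0 + χ 0 / 2 + K / 6 := by
  have hψ_le : ∀ t ∈ Icc (0 : ℝ) 1, ψ t ≤ ψ 0 + t * χ 0 + K * t ^ 2 / 2 := by
    have hB : ∀ t, HasDerivAt (fun t => ψ 0 + t * χ 0 + K * t ^ 2 / 2) (χ 0 + K * t) t := by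
      intro t
      exact ((((hasDerivAt_id t).mul_const (χ 0)).const_add (ψ 0)).add
        (((hasDerivAt_pow 2 t).const_mul K).div_const 2)).congr_deriv (by push_cast; ring)
    refine image_le_of_deriv_right_le_deriv_boundary
      (fun t _ => (hψ t).continuousAt.continuousWithinAt)
      (fun t _ => (hψ t).hasDerivWithinAt) (by simp)
      (fun t _ => (hB t).continuousAt.continuousWithinAt)
      (fun t _ => (hB t).hasDerivWithinAt) hχ
  have hB : ∀ t, HasDerivAt (fun t => φ 0 + t * ψ 0 + t ^ 2 / 2 * χ 0 + K * t ^ 3 / 6)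
      (ψ 0 + t * χ 0 + K * t ^ 2 / 2) t := by
    intro t
    exact (((((hasDerivAt_id t).mul_const (ψ 0)).const_add (φ 0)).add
      (((hasDerivAt_pow 2 t).div_const 2).mul_const (χ 0))).add
      (((hasDerivAt_pow 3 t).const_mul K).div_const 6)).congr_deriv (by push_cast; ring)
  have := image_le_of_deriv_right_le_deriv_boundary
    (fun t _ => (hφ t).continuousAt.continuousWithinAt)
    (fun t _ => (hφ t).hasDerivWithinAt) (by simp)
    (fun t _ => (hB t).continuousAt.continuousWithinAt)
    (fun t _ => (hB t).hasDerivWithinAt) (fun t ht => hψ_le t (Ico_subset_Icc_self ht))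
    (right_mem_Icc.2 zero_le_one)
  linarith

theorem inner_apply_self_le_opNorm_mul_sq {E : Type*} [NormedAddCommGroup E]
    [InnerProductSpace ℝ E] (T : E →L[ℝ] E) (v : E) : ⟪T v, v⟫ ≤ ‖T‖ * ‖v‖ ^ 2 :=
  calc ⟪T v, v⟫ ≤ ‖T v‖ * ‖v‖ := real_inner_le_norm _ _
    _ ≤ ‖T‖ * ‖v‖ * ‖v‖ := by gcongr; exact T.le_opNorm v
    _ = ‖T‖ * ‖v‖ ^ 2 := by ring

theorem le_taylor_add_of_hessian_lipschitz {E : Type*} [NormedAddCommGroup E]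
    [InnerProductSpace ℝ E] [CompleteSpace E] {F : E → ℝ} {gradF : E → E}
    {hessF : E → E →L[ℝ] E} {L : ℝ} {x : E}
    (hgrad : ∀ z, HasGradientAt F (gradF z) z) (hhess : ∀ z, HasFDerivAt gradF (hessF z) z)
    (hlip : ∀ z, ‖hessF z - hessF x‖ ≤ L * ‖z - x‖) (y : E) :
    F y ≤ F x + ⟪gradF x, y - x⟫ + 1 / 2 * ⟪hessF x (y - x), y - x⟫ + L / 6 * ‖y - x‖ ^ 3 := by
  set s := y - x
  have hline : ∀ t : ℝ, HasDerivAt (fun t : ℝ => x + t • s) s t := fun t => by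
    simpa using ((hasDerivAt_id t).smul_const s).const_add x
  have hφ : ∀ t : ℝ, HasDerivAt (fun t => F (x + t • s)) ⟪gradF (x + t • s), s⟫ t := fun t => by
    have := (hgrad _).hasFDerivAt.comp_hasDerivAt t (hline t)
    simp only [InnerProductSpace.toDual_apply_apply] at this
    exact this
  have hψ : ∀ t : ℝ, HasDerivAt (fun t => ⟪gradF (x + t • s), s⟫)
      ⟪hessF (x + t • s) s, s⟫ t := fun t =>
    ((hhess _).comp_hasDerivAt t (hline t)).inner ℝ (hasDerivAt_const t s) |>.congr_deriv
      (by simp)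
  have hχ : ∀ t ∈ Ico (0 : ℝ) 1,
      ⟪hessF (x + t • s) s, s⟫ ≤ ⟪hessF (x + (0 : ℝ) • s) s, s⟫ + L * ‖s‖ ^ 3 * t := by
    intro t ht
    have hdiff := inner_apply_self_le_opNorm_mul_sq (hessF (x + t • s) - hessF x) s
    have hnorm : ‖hessF (x + t • s) - hessF x‖ ≤ L * (t * ‖s‖) := by
      simpa [norm_smul, abs_of_nonneg ht.1] using hlip (x + t • s)
    rw [sub_apply, inner_sub_left] at hdiff
    simp only [zero_smul, add_zero]
    nlinarith [mul_le_mul_of_nonneg_right hnorm (sq_nonneg ‖s‖)]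
  have := taylor_two_le_of_hasDerivAt hφ hψ hχ
  simp only [zero_smul, one_smul, add_zero, s, add_sub_cancel] at this
  linarith

-- `u³/48 + 8a³ - a²u = ((u - 4a)²(u + 8a) + 256a³) / 48`
theorem sq_mul_le_cube_div_add {a u : ℝ} (ha : 0 ≤ a) (hu : 0 ≤ u) :
    a ^ 2 * u ≤ u ^ 3 / 48 + 8 * a ^ 3 := by
  nlinarith [mul_nonneg (sq_nonneg (u - 4 * a)) (by positivity : 0 ≤ u + 8 * a), pow_nonneg ha 3]

theorem Real.rpow_three_halves {x : ℝ} (hx : 0 ≤ x) : x ^ (3 / 2 : ℝ) = √x ^ 3 := by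
  rw [Real.sqrt_eq_rpow, ← Real.rpow_natCast, ← Real.rpow_mul hx]
  norm_num

theorem mul_le_cube_add_rpow_three_halves {M r δ : ℝ} (hM : 0 < M) (hr : 0 ≤ r) (hδ : 0 ≤ δ) :
    δ * r ≤ M / 48 * r ^ 3 + 8 / √M * δ ^ (3 / 2 : ℝ) := by
  obtain ⟨a, ha, rfl⟩ : ∃ a, 0 ≤ a ∧ a ^ 2 = δ := ⟨√δ, Real.sqrt_nonneg _, Real.sq_sqrt hδ⟩
  obtain ⟨b, hb, rfl⟩ : ∃ b, 0 < b ∧ b ^ 2 = M := ⟨√M, Real.sqrt_pos.2 hM, Real.sq_sqrt hM.le⟩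
  rw [Real.rpow_three_halves (by positivity), Real.sqrt_sq ha, Real.sqrt_sq hb.le]
  calc a ^ 2 * r = a ^ 2 * (r * b) / b := by field_simp
    _ ≤ ((r * b) ^ 3 / 48 + 8 * a ^ 3) / b := by
      gcongr; exact sq_mul_le_cube_div_add ha (by positivity)
    _ = b ^ 2 / 48 * r ^ 3 + 8 / b * a ^ 3 := by field_simp

theorem mul_sq_le_cube_add_rpow_three_halves {M r δ η : ℝ} (hM : 0 < M) (hr : 0 ≤ r)
    (hδ : 0 ≤ δ) (hrη : r ≤ η) :
    δ * r ^ 2 / 2 ≤ M / 48 * r ^ 3 + 4 * η ^ (3 / 2 : ℝ) / √M * δ ^ (3 / 2 : ℝ) := by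
  have hη : r ^ (3 / 2 : ℝ) ≤ η ^ (3 / 2 : ℝ) := by gcongr
  obtain ⟨a, ha, rfl⟩ : ∃ a, 0 ≤ a ∧ a ^ 2 = δ := ⟨√δ, Real.sqrt_nonneg _, Real.sq_sqrt hδ⟩
  obtain ⟨b, hb, rfl⟩ : ∃ b, 0 < b ∧ b ^ 2 = M := ⟨√M, Real.sqrt_pos.2 hM, Real.sq_sqrt hM.le⟩
  obtain ⟨c, hc, rfl⟩ : ∃ c, 0 ≤ c ∧ c ^ 2 = r := ⟨√r, Real.sqrt_nonneg _, Real.sq_sqrt hr⟩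
  rw [Real.rpow_three_halves (sq_nonneg c), Real.sqrt_sq hc] at hη
  rw [Real.rpow_three_halves (sq_nonneg a), Real.sqrt_sq ha, Real.sqrt_sq hb.le]
  calc a ^ 2 * (c ^ 2) ^ 2 / 2 = c ^ 3 * (a ^ 2 * (c * b)) / (2 * b) := by field_simp
    _ ≤ c ^ 3 * ((c * b) ^ 3 / 48 + 8 * a ^ 3) / (2 * b) := by
      gcongr; exact sq_mul_le_cube_div_add ha (by positivity)
    _ = b ^ 2 / 96 * (c ^ 2) ^ 3 + 4 * c ^ 3 / b * a ^ 3 := by field_simp; ring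
    _ ≤ b ^ 2 / 48 * (c ^ 2) ^ 3 + 4 * η ^ (3 / 2 : ℝ) / b * a ^ 3 := by
      gcongr
      norm_num

theorem stmt_1 {d : ℕ} (F : EuclideanSpace ℝ (Fin d) → ℝ)
    (gradF : EuclideanSpace ℝ (Fin d) → EuclideanSpace ℝ (Fin d))
    (hessF : EuclideanSpace ℝ (Fin d) →
      EuclideanSpace ℝ (Fin d) →L[ℝ] EuclideanSpace ℝ (Fin d))
    (L₂ : ℝ) (hL₂ : 0 < L₂)
    (hgrad : ∀ z, HasGradientAt F (gradF z) z)
    (hhess : ∀ z, HasFDerivAt gradF (hessF z) z)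
    (hlip : ∀ z w, ‖hessF z - hessF w‖ ≤ L₂ * ‖z - w‖)
    (x g : EuclideanSpace ℝ (Fin d))
    (H : EuclideanSpace ℝ (Fin d) →L[ℝ] EuclideanSpace ℝ (Fin d))
    (M η : ℝ) (hM : M ≥ 4 * L₂)
    (y : EuclideanSpace ℝ (Fin d))
    (hy_mem : y ∈ Metric.closedBall x η)
    (hy_min : IsMinOn
      (fun z => F x + ⟪g, z - x⟫ + (1 / 2) * ⟪z - x, H (z - x)⟫ + M / 6 * ‖z - x‖ ^ 3)
      (Metric.closedBall x η) y) :
    F x - F y ≥ M / 12 * ‖y - x‖ ^ 3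
      - 8 / Real.sqrt M * ‖gradF x - g‖ ^ ((3 : ℝ) / 2)
      - 4 * η ^ ((3 : ℝ) / 2) / Real.sqrt M * ‖hessF x - H‖ ^ ((3 : ℝ) / 2) := by
  have hM₀ : 0 < M := by linarith
  have hyx : ‖y - x‖ ≤ η := by simpa [dist_eq_norm] using hy_mem
  have hmodel : F x + ⟪g, y - x⟫ + 1 / 2 * ⟪y - x, H (y - x)⟫ + M / 6 * ‖y - x‖ ^ 3 ≤ F x := by
    simpa using isMinOn_iff.mp hy_min x (Metric.mem_closedBall_self ((norm_nonneg _).trans hyx))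
  have htaylor := le_taylor_add_of_hessian_lipschitz hgrad hhess (hlip · x) y
  have hgrad_err : ⟪gradF x - g, y - x⟫ ≤ ‖gradF x - g‖ * ‖y - x‖ := real_inner_le_norm _ _
  have hhess_err := inner_apply_self_le_opNorm_mul_sq (hessF x - H) (y - x)
  rw [inner_sub_left] at hgrad_err
  rw [sub_apply, inner_sub_left] at hhess_err
  have hyoung₁ := mul_le_cube_add_rpow_three_halves hM₀ (norm_nonneg (y - x))
    (norm_nonneg (gradF x - g))
  have hyoung₂ := mul_sq_le_cube_add_rpow_three_halves hM₀ (norm_nonneg (y - x))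
    (norm_nonneg (hessF x - H)) hyx
  have hL₂M : L₂ / 6 * ‖y - x‖ ^ 3 ≤ M / 24 * ‖y - x‖ ^ 3 :=
    mul_le_mul_of_nonneg_right (by linarith) (by positivity)
  linarith [real_inner_comm (H (y - x)) (y - x)]
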